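/- Let X and Y be distinct Vamos pairs such that X ∪ Y is independent in the Vamos matroid (i.e., {X, Y} = {A, D}), and suppose the dealer is not a member of X. Then for any perfect secret sharing scheme, 2 ≤ h(Y|X). -/

import Mathlib

open MeasureTheory Finset

/-- Shannon entropy of a random variable with values in a finite type:
`H(f) = ∑ₐ −P(f = a)·log P(f = a)`. -/
noncomputable def shannonEntropy {Ω : Type} [MeasurableSpace Ω] {α : Type} [Fintype α]
    (μ : Measure Ω) (f : Ω → α) : ℝ :=
  ∑ a : α, Real.negMulLog ((μ (f ⁻¹' {a})).toReal)

/-- A family of random variables on a common probability space: one (finite-valued)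
random variable `secret` for the secret, and one random variable `share p` for the
share of each participant `p`. -/
structure Scheme (P : Type) [Fintype P] [DecidableEq P] where
  (Ω : Type)
  [mΩ : MeasurableSpace Ω]
  (μ : Measure Ω)
  [prob : IsProbabilityMeasure μ]
  (SecT : Type)
  [secFin : Fintype SecT]
  (ShT : P → Type)
  [shFin : ∀ p, Fintype (ShT p)]
  (secret : Ω → SecT)
  (share : (p : P) → Ω → ShT p)
  (secret_meas : ∀ s : Set SecT, MeasurableSet (secret ⁻¹' s))
  (share_meas : ∀ p, ∀ s : Set (ShT p), MeasurableSet (share p ⁻¹' s))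

namespace Scheme

variable {P : Type} [Fintype P] [DecidableEq P]

/-- `H(S)`: the entropy of the secret. -/
noncomputable def Hsec (S : Scheme P) : ℝ :=
  letI := S.mΩ; letI := S.secFin
  shannonEntropy S.μ S.secret

/-- `H(X)`: the joint entropy of the shares of the participants in `X`. -/
noncomputable def Hset (S : Scheme P) (X : Finset P) : ℝ :=
  letI := S.mΩ; letI := S.shFin
  shannonEntropy S.μ (fun ω => fun p : {y // y ∈ X} => S.share p.1 ω)

/-- `H(X ∪ {S})`: the joint entropy of the shares of the participants in `X`
together with the secret. -/
noncomputable def HsetS (S : Scheme P) (X : Finset P) : ℝ :=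
  letI := S.mΩ; letI := S.secFin; letI := S.shFin
  shannonEntropy S.μ (fun ω => ((fun p : {y // y ∈ X} => S.share p.1 ω), S.secret ω))

/-- The normalized entropy `h(X) = H(X)/H(S)`. -/
noncomputable def hset (S : Scheme P) (X : Finset P) : ℝ := S.Hset X / S.Hsec

/-- The conditional normalized entropy `h(X|Y) = h(X ∪ Y) − h(Y)`. -/
noncomputable def hcond (S : Scheme P) (X Y : Finset P) : ℝ :=
  S.hset (X ∪ Y) - S.hset Y

/-- `Σ` is a perfect secret sharing scheme for the access structure `Γ`:
the conditional entropy `H(S|X) = H(X ∪ {S}) − H(X)` equals `0` for every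
qualified set `X` and equals `H(S)` for every unqualified set `X`. -/
def IsPerfect (S : Scheme P) (Γ : Finset P → Prop) : Prop :=
  (∀ X : Finset P, Γ X → S.HsetS X - S.Hset X = 0) ∧
  (∀ X : Finset P, ¬ Γ X → S.HsetS X - S.Hset X = S.Hsec)

end Scheme
/-- The four Vamos pairs `A = {v₁,v₂}`, `B = {v₃,v₄}`, `C = {v₅,v₆}`, `D = {v₇,v₈}`,
where participant `vᵢ` is represented by `(i-1 : Fin 8)`. -/
def pairA : Finset (Fin 8) := {0, 1}
def pairB : Finset (Fin 8) := {2, 3}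
def pairC : Finset (Fin 8) := {4, 5}
def pairD : Finset (Fin 8) := {6, 7}

/-- `X` is one of the four Vamos pairs. -/
def IsVamosPair (X : Finset (Fin 8)) : Prop :=
  X = pairA ∨ X = pairB ∨ X = pairC ∨ X = pairD

/-- The dependent sets of the Vamos matroid: the five special four-element sets
`AB`, `AC`, `BC`, `BD`, `CD`, and all sets with at least five elements. -/
def VamosDep (X : Finset (Fin 8)) : Prop :=
  X = pairA ∪ pairB ∨ X = pairA ∪ pairC ∨ X = pairB ∪ pairC ∨
    X = pairB ∪ pairD ∨ X = pairC ∪ pairD ∨ 5 ≤ X.card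

/-- The circuits of the Vamos matroid: minimal dependent sets. -/
def VamosCircuit (X : Finset (Fin 8)) : Prop :=
  VamosDep X ∧ ∀ Y ⊂ X, ¬ VamosDep Y

/-- The access structure `Γₓ` induced by the Vamos matroid with dealer `x`
(the dealer is regarded as a participant who is individually qualified):
a set is qualified iff it contains a minimal qualified set, the minimal
qualified sets being `{x}` and the sets `M ⊆ Q \ {x}` with `M ∪ {x}` a circuit. -/
def VamosQualified (x : Fin 8) (Y : Finset (Fin 8)) : Prop :=
  x ∈ Y ∨ ∃ M ⊆ Y, x ∉ M ∧ VamosCircuit (insert x M)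

/-- `λ = (max₁≤ᵢ≤₈ h({vᵢ})) − 1`. -/
noncomputable def Scheme.lam (S : Scheme (Fin 8)) : ℝ :=
  (Finset.univ.sup' Finset.univ_nonempty fun i : Fin 8 => S.hset {i}) - 1

/-- The information rate `ρ(Σ) = min₁≤ᵢ≤₈ H(S)/H(vᵢ)` of a scheme. -/
noncomputable def Scheme.rho (S : Scheme (Fin 8)) : ℝ :=
  Finset.univ.inf' Finset.univ_nonempty fun i : Fin 8 => S.Hsec / S.Hset {i}


/-!
Pick `b ∈ Y` and `W ⊇ X` with `b ∉ W` such that `bX` and `W` are unqualified while `YX` and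
`bW` are qualified. Perfectness makes each of the steps `bX → YX` and `W → bW` raise the entropy
by at least `H(S)`, and submodularity, `H(bW) + H(X) ≤ H(W) + H(bX)`, moves the second gain onto
the step `X → bX`; hence `H(YX) ≥ H(X) + 2 H(S)`. Submodularity of Shannon entropy is Gibbs'
inequality for the joint law `p(a,b,c)` against `p(a,b) p(a,c) / p(a)`.

For independent `Z` in the Vamos matroid, `Z` is qualified in `Γₓ` iff `x ∈ Z` or `Z ∪ {x}` is
dependent, so the choice of `b` and `W` reduces to a finite search over the elements of `Q`.
-/

/-- Gibbs' inequality. -/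
theorem sum_negMulLog_le_neg_sum_mul_log {ι : Type*} [Fintype ι] {p q : ι → ℝ}
    (hp : ∀ i, 0 ≤ p i) (hq : ∀ i, 0 ≤ q i) (hpq : ∀ i, p i ≠ 0 → q i ≠ 0)
    (hsum : ∑ i, q i ≤ ∑ i, p i) :
    ∑ i, Real.negMulLog (p i) ≤ -∑ i, p i * Real.log (q i) := by
  have hpoint : ∀ i, Real.negMulLog (p i) + p i * Real.log (q i) ≤ q i - p i := by
    intro i
    rcases (hp i).eq_or_lt with h | h
    · simp [← h, hq i]
    have hqi : 0 < q i := (hq i).lt_of_ne (hpq i h.ne').symm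
    have hlog := mul_le_mul_of_nonneg_left (Real.log_le_sub_one_of_pos (div_pos hqi h)) h.le
    rw [Real.log_div hqi.ne' h.ne', mul_sub, mul_sub, mul_div_cancel₀ _ h.ne'] at hlog
    rw [Real.negMulLog]
    linarith
  have := Finset.sum_le_sum fun i (_ : i ∈ univ) => hpoint i
  rw [sum_add_distrib, sum_sub_distrib] at this
  linarith

section Entropy

variable {Ω : Type} [MeasurableSpace Ω] {μ : Measure Ω} {α β γ : Type}
  {f : Ω → α} {g : Ω → β} {k : Ω → γ}

theorem measurableSet_preimage_of_singleton [Countable α] (hf : ∀ a, MeasurableSet (f ⁻¹' {a}))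
    (s : Set α) : MeasurableSet (f ⁻¹' s) := by
  rw [← Set.biUnion_preimage_singleton]
  exact .biUnion s.to_countable fun a _ => hf a

theorem measurableSet_preimage_prodMk_singleton (hf : ∀ a, MeasurableSet (f ⁻¹' {a}))
    (hg : ∀ b, MeasurableSet (g ⁻¹' {b})) (x : α × β) :
    MeasurableSet ((fun ω => (f ω, g ω)) ⁻¹' {x}) := by
  rw [← Prod.mk.eta (p := x), ← Set.singleton_prod_singleton, Set.mk_preimage_prod]
  exact (hf _).inter (hg _)

variable [IsFiniteMeasure μ]

theorem measureReal_preimage_comp_singleton [Fintype α] [DecidableEq β]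
    (hf : ∀ a, MeasurableSet (f ⁻¹' {a})) (φ : α → β) (b : β) :
    μ.real ((fun ω => φ (f ω)) ⁻¹' {b}) = ∑ a with φ a = b, μ.real (f ⁻¹' {a}) := by
  rw [← measureReal_biUnion_finset _ fun a _ => hf a]
  · congr 1
    ext ω
    simp
  · intro a _ a' _ h
    exact (Set.disjoint_singleton.2 h).preimage f

theorem sum_measureReal_preimage_prodMk [Fintype β] (hf : ∀ a, MeasurableSet (f ⁻¹' {a}))
    (hg : ∀ b, MeasurableSet (g ⁻¹' {b})) (a : α) :
    ∑ b, μ.real ((fun ω => (f ω, g ω)) ⁻¹' {(a, b)}) = μ.real (f ⁻¹' {a}) := by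
  rw [← measureReal_biUnion_finset _ fun b _ => measurableSet_preimage_prodMk_singleton hf hg _]
  · congr 1
    ext ω
    simp
  · intro b _ b' _ h
    exact (Set.disjoint_singleton.2 fun h' => h (Prod.ext_iff.1 h').2).preimage _

variable [Fintype α] [Fintype β]

theorem sum_mul_log_measureReal_comp (hf : ∀ a, MeasurableSet (f ⁻¹' {a})) (φ : α → β) :
    ∑ a, μ.real (f ⁻¹' {a}) * Real.log (μ.real ((fun ω => φ (f ω)) ⁻¹' {φ a})) =
      -shannonEntropy μ (fun ω => φ (f ω)) := by
  classical
  rw [← sum_fiberwise univ φ, shannonEntropy, ← sum_neg_distrib]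
  refine sum_congr rfl fun b _ => ?_
  have hfiber : ∀ a ∈ ({a | φ a = b} : Finset α),
      μ.real (f ⁻¹' {a}) * Real.log (μ.real ((fun ω => φ (f ω)) ⁻¹' {φ a})) =
        μ.real (f ⁻¹' {a}) * Real.log (μ.real ((fun ω => φ (f ω)) ⁻¹' {b})) := by
    intro a ha
    rw [(mem_filter.1 ha).2]
  rw [sum_congr rfl hfiber, ← sum_mul, Real.negMulLog, neg_mul, neg_neg, ← measureReal_def]
  congr 1
  exact (measureReal_preimage_comp_singleton hf φ b).symm

theorem shannonEntropy_comp_le (hf : ∀ a, MeasurableSet (f ⁻¹' {a})) (φ : α → β) :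
    shannonEntropy μ (fun ω => φ (f ω)) ≤ shannonEntropy μ f := by
  rw [← neg_le_neg_iff, ← sum_mul_log_measureReal_comp hf φ, shannonEntropy, ← sum_neg_distrib]
  refine sum_le_sum fun a _ => ?_
  rw [Real.negMulLog, neg_mul, neg_neg, ← measureReal_def]
  rcases (measureReal_nonneg (μ := μ) (s := f ⁻¹' {a})).eq_or_lt with h | h
  · simp [← h]
  · exact mul_le_mul_of_nonneg_left (Real.log_le_log h
      (measureReal_mono fun ω (hω : f ω = a) => congrArg φ hω)) h.le

theorem shannonEntropy_comp_eq (hf : ∀ a, MeasurableSet (f ⁻¹' {a})) {φ : α → β} {ψ : β → α}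
    (hψ : ∀ ω, ψ (φ (f ω)) = f ω) :
    shannonEntropy μ (fun ω => φ (f ω)) = shannonEntropy μ f := by
  refine le_antisymm (shannonEntropy_comp_le hf φ) ?_
  calc shannonEntropy μ f = shannonEntropy μ (fun ω => ψ (φ (f ω))) := by simp only [hψ]
    _ ≤ _ := shannonEntropy_comp_le (fun b => measurableSet_preimage_of_singleton hf (φ ⁻¹' {b})) ψ

variable [Fintype γ]

theorem shannonEntropy_prodMk_add_le (hf : ∀ a, MeasurableSet (f ⁻¹' {a}))
    (hg : ∀ b, MeasurableSet (g ⁻¹' {b})) (hk : ∀ c, MeasurableSet (k ⁻¹' {c})) :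
    shannonEntropy μ (fun ω => (f ω, g ω, k ω)) + shannonEntropy μ f ≤
      shannonEntropy μ (fun ω => (f ω, g ω)) + shannonEntropy μ (fun ω => (f ω, k ω)) := by
  set t : Ω → α × β × γ := fun ω => (f ω, g ω, k ω)
  have hgk := measurableSet_preimage_prodMk_singleton hg hk
  have ht := measurableSet_preimage_prodMk_singleton hf hgk
  set P : α × β × γ → ℝ := fun x => μ.real (t ⁻¹' {x})
  set pA : α → ℝ := fun a => μ.real (f ⁻¹' {a})
  set pAB : α × β → ℝ := fun y => μ.real ((fun ω => (f ω, g ω)) ⁻¹' {y})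
  set pAC : α × γ → ℝ := fun y => μ.real ((fun ω => (f ω, k ω)) ⁻¹' {y})
  set q : α × β × γ → ℝ := fun x => pAB (x.1, x.2.1) * pAC (x.1, x.2.2) / pA x.1
  have hP_le (x) : P x ≤ pA x.1 ∧ P x ≤ pAB (x.1, x.2.1) ∧ P x ≤ pAC (x.1, x.2.2) := by
    refine ⟨?_, ?_, ?_⟩ <;> exact measureReal_mono fun ω (hω : t ω = x) => by subst hω; rfl
  have hsumP : ∑ x, P x = ∑ a, pA a := by
    rw [Fintype.sum_prod_type]
    exact sum_congr rfl fun a _ => sum_measureReal_preimage_prodMk hf hgk a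
  have hsumq : ∑ x, q x = ∑ a, pA a := by
    simp only [q, Fintype.sum_prod_type, ← sum_div, ← mul_sum, ← sum_mul, pAB, pAC,
      sum_measureReal_preimage_prodMk hf hg, sum_measureReal_preimage_prodMk hf hk]
    exact sum_congr rfl fun a _ => mul_self_div_self _
  have hlog (x) : P x * Real.log (q x) = P x * Real.log (pAB (x.1, x.2.1)) +
      P x * Real.log (pAC (x.1, x.2.2)) - P x * Real.log (pA x.1) := by
    have hPx : 0 ≤ P x := measureReal_nonneg
    rcases hPx.eq_or_lt with h | h
    · rw [← h]
      ring
    obtain ⟨hA, hAB, hAC⟩ := hP_le x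
    rw [Real.log_div (mul_pos (h.trans_le hAB) (h.trans_le hAC)).ne' (h.trans_le hA).ne',
      Real.log_mul (h.trans_le hAB).ne' (h.trans_le hAC).ne']
    ring
  have hq_ne (x) (hx : P x ≠ 0) : q x ≠ 0 := by
    obtain ⟨hA, hAB, hAC⟩ := hP_le x
    have h : 0 < P x := (measureReal_nonneg : 0 ≤ P x).lt_of_ne' hx
    exact (div_pos (mul_pos (h.trans_le hAB) (h.trans_le hAC)) (h.trans_le hA)).ne'
  have hgibbs := sum_negMulLog_le_neg_sum_mul_log (p := P) (q := q)
    (fun _ => measureReal_nonneg) (fun _ => by positivity) hq_ne (hsumq.trans hsumP.symm).le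
  simp only [hlog, sum_sub_distrib, sum_add_distrib] at hgibbs
  have hAB := sum_mul_log_measureReal_comp (μ := μ) ht fun x => (x.1, x.2.1)
  have hAC := sum_mul_log_measureReal_comp (μ := μ) ht fun x => (x.1, x.2.2)
  have hA := sum_mul_log_measureReal_comp (μ := μ) ht Prod.fst
  have hT : shannonEntropy μ t = ∑ x, Real.negMulLog (P x) := rfl
  linarith

end Entropy

attribute [instance] Scheme.mΩ Scheme.prob Scheme.secFin Scheme.shFin

namespace Scheme

variable {P : Type} [Fintype P] [DecidableEq P] (S : Scheme P)

theorem measurableSet_shares_preimage (X : Finset P) (v : ∀ p : X, S.ShT p) :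
    MeasurableSet ((fun ω (p : X) => S.share p.1 ω) ⁻¹' {v}) := by
  have : (fun ω (p : X) => S.share p.1 ω) ⁻¹' {v} = ⋂ p : X, S.share p.1 ⁻¹' {v p} := by
    ext ω
    simp [funext_iff]
  rw [this]
  exact .iInter fun p => S.share_meas p.1 {v p}

theorem measurableSet_sharesSecret_preimage (X : Finset P) (v : (∀ p : X, S.ShT p) × S.SecT) :
    MeasurableSet ((fun ω => ((fun p : X => S.share p.1 ω), S.secret ω)) ⁻¹' {v}) :=
  measurableSet_preimage_prodMk_singleton (S.measurableSet_shares_preimage X)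
    (fun s => S.secret_meas {s}) v

theorem HsetS_mono {X Y : Finset P} (h : X ⊆ Y) : S.HsetS X ≤ S.HsetS Y :=
  shannonEntropy_comp_le (S.measurableSet_sharesSecret_preimage Y)
    (Prod.map (restrict₂ h) id)

theorem Hset_union_add_Hset_inter_le (X Y : Finset P) :
    S.Hset (X ∪ Y) + S.Hset (X ∩ Y) ≤ S.Hset X + S.Hset Y := by
  have hsubmod := shannonEntropy_prodMk_add_le (μ := S.μ)
    (S.measurableSet_shares_preimage (X ∩ Y)) (S.measurableSet_shares_preimage X)
    (S.measurableSet_shares_preimage Y)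
  have hunion : shannonEntropy S.μ (fun ω => ((fun p : ↥(X ∩ Y) => S.share p.1 ω),
      (fun p : X => S.share p.1 ω), (fun p : Y => S.share p.1 ω))) = S.Hset (X ∪ Y) :=
    shannonEntropy_comp_eq (S.measurableSet_shares_preimage (X ∪ Y))
      (φ := fun v => (restrict₂ inter_subset_union v,
        restrict₂ subset_union_left v, restrict₂ subset_union_right v))
      (ψ := fun w p => if hp : p.1 ∈ X then w.2.1 ⟨p.1, hp⟩
        else w.2.2 ⟨p.1, (mem_union.1 p.2).resolve_left hp⟩)
      fun ω => by
        funext p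
        split_ifs <;> rfl
  have hleft : shannonEntropy S.μ (fun ω => ((fun p : ↥(X ∩ Y) => S.share p.1 ω),
      (fun p : X => S.share p.1 ω))) = S.Hset X :=
    shannonEntropy_comp_eq (S.measurableSet_shares_preimage X)
      (φ := fun v => (restrict₂ inter_subset_left v, v)) (ψ := Prod.snd)
      fun _ => rfl
  have hright : shannonEntropy S.μ (fun ω => ((fun p : ↥(X ∩ Y) => S.share p.1 ω),
      (fun p : Y => S.share p.1 ω))) = S.Hset Y :=
    shannonEntropy_comp_eq (S.measurableSet_shares_preimage Y)
      (φ := fun v => (restrict₂ inter_subset_right v, v)) (ψ := Prod.snd)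
      fun _ => rfl
  rwa [hunion, hleft, hright] at hsubmod

variable {S} {Γ : Finset P → Prop}

theorem Hset_add_Hsec_le (hperf : S.IsPerfect Γ) {X Y : Finset P} (hXY : X ⊆ Y) (hX : ¬ Γ X)
    (hY : Γ Y) : S.Hset X + S.Hsec ≤ S.Hset Y := by
  have hXS := hperf.2 X hX
  have hYS := hperf.1 Y hY
  have := S.HsetS_mono hXY
  linarith

theorem hcond_eq (X Y : Finset P) : S.hcond X Y = (S.Hset (X ∪ Y) - S.Hset Y) / S.Hsec := by
  rw [hcond, hset, hset, sub_div]

theorem two_le_hcond_of_insert (hperf : S.IsPerfect Γ) (hpos : 0 < S.Hsec) {X Y W : Finset P}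
    {b : P} (hbY : b ∈ Y) (hXW : X ⊆ W) (hb : b ∉ W) (hbX : ¬ Γ (insert b X))
    (hYX : Γ (Y ∪ X)) (hW : ¬ Γ W) (hbW : Γ (insert b W)) :
    2 ≤ S.hcond Y X := by
  have h₁ := Hset_add_Hsec_le hperf
    (insert_subset (mem_union_left X hbY) subset_union_right) hbX hYX
  have h₂ := Hset_add_Hsec_le hperf (subset_insert b W) hW hbW
  have h₃ := S.Hset_union_add_Hset_inter_le W (insert b X)
  rw [union_insert, union_eq_left.2 hXW, inter_insert_of_notMem hb,
    inter_eq_right.2 hXW] at h₃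
  rw [hcond_eq, le_div_iff₀ hpos]
  linarith

end Scheme

theorem VamosDep.four_le_card {T : Finset (Fin 8)} (h : VamosDep T) : 4 ≤ T.card := by
  rcases h with rfl | rfl | rfl | rfl | rfl | h
  all_goals first | decide | omega

theorem VamosDep.mono {T T' : Finset (Fin 8)} (h : VamosDep T) (hT : T ⊆ T') : VamosDep T' := by
  rcases hT.eq_or_ssubset with rfl | hlt
  · exact h
  · have := card_lt_card hlt
    have := h.four_le_card
    exact Or.inr (Or.inr (Or.inr (Or.inr (Or.inr (by omega)))))

theorem exists_vamosCircuit_subset {T : Finset (Fin 8)} (h : VamosDep T) :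
    ∃ C ⊆ T, VamosCircuit C := by
  obtain ⟨C, hCT, hC⟩ := exists_minimal_le_of_wellFoundedLT VamosDep T h
  exact ⟨C, hCT, hC.prop, fun _ hlt => hC.not_prop_of_lt hlt⟩

theorem vamosQualified_iff {x : Fin 8} {Z : Finset (Fin 8)} (hZ : ¬ VamosDep Z) :
    VamosQualified x Z ↔ x ∈ Z ∨ VamosDep (insert x Z) := by
  refine ⟨?_, ?_⟩
  · rintro (hx | ⟨M, hMZ, -, hC⟩)
    · exact Or.inl hx
    · exact Or.inr (hC.1.mono (insert_subset_insert x hMZ))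
  · rintro (hx | hdep)
    · exact Or.inl hx
    by_cases hxZ : x ∈ Z
    · exact Or.inl hxZ
    obtain ⟨C, hCZ, hC⟩ := exists_vamosCircuit_subset hdep
    have hxC : x ∈ C := by
      by_contra hxC
      exact hZ (hC.1.mono ((subset_insert_iff_of_notMem hxC).1 hCZ))
    refine Or.inr ⟨C.erase x, ?_, notMem_erase x C, by rwa [insert_erase hxC]⟩
    exact (erase_subset_erase x hCZ).trans (erase_insert_subset x Z)

instance : DecidablePred VamosDep := fun T => by unfold VamosDep; infer_instance

/-- Decidable form of `VamosQualified x Z`, equivalent to it for independent `Z`. -/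
def VamosSpans (x : Fin 8) (Z : Finset (Fin 8)) : Prop := x ∈ Z ∨ VamosDep (insert x Z)

instance (x : Fin 8) : DecidablePred (VamosSpans x) := fun Z => by
  unfold VamosSpans; infer_instance

theorem exists_vamosSpans_witness {x : Fin 8} {X Y : Finset (Fin 8)} (hX : IsVamosPair X)
    (hY : IsVamosPair Y) (hne : X ≠ Y) (hindep : ¬ VamosDep (X ∪ Y)) (hx : x ∉ X) :
    ∃ b ∈ Y, ∃ c, b ∉ insert c X ∧ ¬ VamosDep (insert b (insert c X)) ∧
      ¬ VamosSpans x (insert b X) ∧ VamosSpans x (Y ∪ X) ∧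
      ¬ VamosSpans x (insert c X) ∧ VamosSpans x (insert b (insert c X)) := by
  rcases hX with rfl | rfl | rfl | rfl <;> rcases hY with rfl | rfl | rfl | rfl <;>
    first
      | exact absurd rfl hne
      | exact absurd (by decide) hindep
      | revert x; decide

theorem exists_vamosQualified_witness {x : Fin 8} {X Y : Finset (Fin 8)} (hX : IsVamosPair X)
    (hY : IsVamosPair Y) (hne : X ≠ Y) (hindep : ¬ VamosDep (X ∪ Y)) (hx : x ∉ X) :
    ∃ b ∈ Y, ∃ W, X ⊆ W ∧ b ∉ W ∧ ¬ VamosQualified x (insert b X) ∧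
      VamosQualified x (Y ∪ X) ∧ ¬ VamosQualified x W ∧ VamosQualified x (insert b W) := by
  obtain ⟨b, hbY, c, hb, hind, h₁, h₂, h₃, h₄⟩ := exists_vamosSpans_witness hX hY hne hindep hx
  have hsub {Z} (hZ : Z ⊆ insert b (insert c X)) : VamosQualified x Z ↔ VamosSpans x Z :=
    vamosQualified_iff fun h => hind (h.mono hZ)
  refine ⟨b, hbY, insert c X, subset_insert c X, hb, ?_, ?_, ?_, (hsub subset_rfl).2 h₄⟩
  · rwa [hsub (insert_subset_insert b (subset_insert c X))]
  · rwa [vamosQualified_iff (by rwa [union_comm])]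
  · rwa [hsub (subset_insert b _)]

/-- If `X`, `Y` are distinct Vamos pairs with `X ∪ Y` independent in the Vamos
matroid and the dealer is not a member of `X`, then `2 ≤ h(Y|X)`. -/
theorem two_le_hcond (x : Fin 8)
    (S : Scheme (Fin 8)) (hperf : S.IsPerfect (VamosQualified x)) (hpos : 0 < S.Hsec)
    (X Y : Finset (Fin 8)) (hX : IsVamosPair X) (hY : IsVamosPair Y) (hne : X ≠ Y)
    (hindep : ¬ VamosDep (X ∪ Y)) (hx : x ∉ X) :
    2 ≤ S.hcond Y X := by
  obtain ⟨b, hbY, W, hXW, hb, hbX, hYX, hW, hbW⟩ :=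
    exists_vamosQualified_witness hX hY hne hindep hx
  exact Scheme.two_le_hcond_of_insert hperf hpos hbY hXW hb hbX hYX hW hbW
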